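/- On the projective line ℙ¹, the first sheaf cohomology of O(i) has dimension -1-i if i < 0 and dimension 0 if i ≥ 0. -/

import Mathlib

/-!
In the monomial basis of `ℂ[z, z⁻¹]`, the image of the Čech differential is spanned by the
monomials `z^j` with `j ≥ 0` (from `ℂ[z]`) or `j ≤ i` (from `zⁱ·ℂ[z⁻¹]`). The cokernel therefore
has basis the `z^j` with `i < j < 0`, of which there are `-1 - i` when `i < 0` and none otherwise.
-/

/-- The sections of `O(i)` on the second chart of ℙ¹: the ℂ-span of the Laurent
monomials `z^j` with `j ≤ i` (i.e. `zⁱ·ℂ[z⁻¹]`). -/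
noncomputable def M2 (i : ℤ) : Submodule ℂ (LaurentPolynomial ℂ) :=
  Submodule.span ℂ {f | ∃ j : ℤ, j ≤ i ∧ f = LaurentPolynomial.T j}

/-- The Čech differential for the sheaf `O(i)` on ℙ¹ with respect to the
standard two-chart cover: `(m₁, m₂) ↦ φ₁(m₁) - φ₂(m₂)`, from
`ℂ[z] ⊕ zⁱ·ℂ[z⁻¹]` to `ℂ[z,z⁻¹]`. -/
noncomputable def cechMap (i : ℤ) : Polynomial ℂ × M2 i →ₗ[ℂ] LaurentPolynomial ℂ :=
  LinearMap.coprod (Polynomial.toLaurentAlg : Polynomial ℂ →ₐ[ℂ] _).toLinearMap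
    (-(M2 i).subtype)

open AddMonoidAlgebra LaurentPolynomial Module

namespace AddMonoidAlgebra

variable {R S M : Type*} [Semiring R] [Semiring S] [Module R S]

theorem supported_union (s t : Set M) :
    supported R S (s ∪ t) = supported R S s ⊔ supported R S t := by
  simp only [supported_eq_map, Finsupp.supported_union, Submodule.map_sup]

theorem isCompl_supported_compl (s : Set M) :
    IsCompl (supported R S s) (supported R S sᶜ) := by
  simp only [supported_eq_map]
  exact (Submodule.orderIsoMapComap (coeffLinearEquiv (S := S) (M := M) R).symm).isCompl_iff.mp
    ⟨Finsupp.disjoint_supported_supported isCompl_compl.disjoint,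
      Finsupp.codisjoint_supported_supported isCompl_compl.codisjoint⟩

theorem finrank_quotient_supported_compl {K : Type*} [Field K] (s : Set M) [Finite s] :
    finrank K (K[M] ⧸ supported K K sᶜ) = Nat.card s := by
  have := Fintype.ofFinite s
  have e := Submodule.quotientEquivOfIsCompl _ _ (isCompl_supported_compl (R := K) (S := K) sᶜ)
  rw [compl_compl] at e
  rw [(e.trans (supportedEquivFinsupp s)).finrank_eq, finrank_finsupp_self,
    Nat.card_eq_fintype_card]

end AddMonoidAlgebra

theorem Polynomial.range_toLaurentAlg {R : Type*} [CommSemiring R] :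
    LinearMap.range (toLaurentAlg : Polynomial R →ₐ[R] R[T;T⁻¹]).toLinearMap =
      supported R R {j : ℤ | 0 ≤ j} := by
  apply le_antisymm
  · rintro _ ⟨p, rfl⟩
    rw [mem_supported, AlgHom.toLinearMap_apply, toLaurentAlg_apply, support_coeff_toLaurent]
    simp
  · rw [supported_eq_span_single, Submodule.span_le]
    rintro _ ⟨j, hj, rfl⟩
    lift j to ℕ using hj
    exact ⟨X ^ j, toLaurent_X_pow j⟩

theorem M2_eq_supported (i : ℤ) : M2 i = supported ℂ ℂ {j : ℤ | j ≤ i} := by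
  rw [M2, supported_eq_span_single]
  congr 1
  ext f
  exact exists_congr fun j => and_congr_right fun _ => eq_comm

theorem range_cechMap (i : ℤ) : LinearMap.range (cechMap i) = supported ℂ ℂ (Set.Ioo i 0)ᶜ := by
  rw [cechMap, LinearMap.range_coprod, LinearMap.range_neg, Submodule.range_subtype,
    Polynomial.range_toLaurentAlg, M2_eq_supported, ← supported_union]
  congr 1
  ext j
  simp only [Set.mem_union, Set.mem_ofPred_eq, Set.mem_compl_iff, Set.mem_Ioo]
  omega

/-- `H¹(ℙ¹, O(i))`, computed as the cokernel of the Čech differential for the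
two-chart cover, has dimension `-1 - i` if `i < 0` and `0` if `i ≥ 0`. -/
theorem dim_H1_of_twisting_sheaf (i : ℤ) :
    (Module.finrank ℂ (LaurentPolynomial ℂ ⧸ LinearMap.range (cechMap i)) : ℤ) =
      if i < 0 then -1 - i else 0 := by
  rw [range_cechMap, finrank_quotient_supported_compl, Nat.card_eq_card_toFinset,
    Set.toFinset_Ioo, Int.card_Ioo]
  split_ifs <;> omega
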